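/- arXiv:1807.00838 — 4 statements merged into one kernel-verified Lean document; each statement's English description precedes it below -/
import Mathlib

section
/- Let Λ = (Λ_1, …, Λ_n) in ℂ^m be admissible with n > 2m. Then the (m+1) × n complex matrix whose i-th column is (Λ_i, 1) ∈ ℂ^{m+1} has rank m+1. Equivalently, the points Λ_1, …, Λ_n affinely span ℂ^m. -/
/-!
A linear relation among the rows of the matrix is an affine function `x ↦ a ⬝ᵥ x + b`
vanishing at every `Λ i`. Since `0` lies in the convex hull of the `Λ i`, evaluating there
gives `b = 0`. If `a ≠ 0`, all `Λ i` lie in the proper real subspace `ker a`, and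
Carathéodory's theorem in that subspace, of real dimension `< 2m`, writes `0` as a convex
combination of at most `2m` of them.
-/

open Module Matrix

section Caratheodory

variable {E ι : Type*} [AddCommGroup E] [Module ℝ E]

theorem exists_finset_card_le_finrank_succ_of_mem_convexHull {s : Set E}
    {V : Submodule ℝ E} [FiniteDimensional ℝ V] (hsV : s ⊆ V) {x : E}
    (hx : x ∈ convexHull ℝ s) :
    ∃ t : Finset E, ↑t ⊆ s ∧ t.card ≤ finrank ℝ V + 1 ∧ x ∈ convexHull ℝ (t : Set E) := by
  rw [convexHull_eq_union] at hx
  simp only [Set.mem_iUnion] at hx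
  obtain ⟨t, hts, hai, hxt⟩ := hx
  have hspan : vectorSpan ℝ (Set.range ((↑) : t → E)) ≤ V := by
    rw [vectorSpan_def, Submodule.span_le]
    rintro _ ⟨_, ⟨y, rfl⟩, _, ⟨z, rfl⟩, rfl⟩
    exact V.sub_mem (hsV (hts y.2)) (hsV (hts z.2))
  refine ⟨t, hts, ?_, hxt⟩
  calc t.card = Fintype.card t := (Fintype.card_coe t).symm
    _ ≤ finrank ℝ (vectorSpan ℝ (Set.range ((↑) : t → E))) + 1 := hai.card_le_finrank_succ
    _ ≤ finrank ℝ V + 1 := by gcongr; exact Submodule.finrank_mono hspan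

theorem exists_finset_card_le_of_mem_convexHull_range {Λ : ι → E} {V : Submodule ℝ E}
    [FiniteDimensional ℝ V] (hΛV : Set.range Λ ⊆ V) {x : E}
    (hx : x ∈ convexHull ℝ (Set.range Λ)) :
    ∃ J : Finset ι, J.card ≤ finrank ℝ V + 1 ∧ x ∈ convexHull ℝ (Λ '' J) := by
  classical
  obtain ⟨t, htΛ, htcard, hxt⟩ := exists_finset_card_le_finrank_succ_of_mem_convexHull hΛV hx
  obtain ⟨J, -, hJinj, rfl⟩ :=
    Finset.exists_subset_injOn_image_eq_of_surjOn Set.univ t (by simpa [Set.SurjOn] using htΛ)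
  refine ⟨J, ?_, by simpa using hxt⟩
  rwa [Finset.card_image_of_injOn hJinj] at htcard

theorem span_range_eq_top_of_forall_zero_notMem_convexHull [FiniteDimensional ℝ E]
    {Λ : ι → E} (h0 : (0 : E) ∈ convexHull ℝ (Set.range Λ))
    (hsmall : ∀ J : Finset ι, J.card ≤ finrank ℝ E →
      (0 : E) ∉ convexHull ℝ (Λ '' J)) :
    Submodule.span ℝ (Set.range Λ) = ⊤ := by
  by_contra hne
  obtain ⟨J, hJcard, h0J⟩ :=
    exists_finset_card_le_of_mem_convexHull_range Submodule.subset_span h0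
  exact hsmall J (hJcard.trans (Submodule.finrank_lt hne)) h0J

theorem eq_zero_of_forall_apply_add_eq_zero {F : Type*} [AddCommGroup F] [Module ℝ F]
    {Λ : ι → E} (h0 : (0 : E) ∈ convexHull ℝ (Set.range Λ))
    (hspan : Submodule.span ℝ (Set.range Λ) = ⊤) {φ : E →ₗ[ℝ] F} {b : F}
    (hφ : ∀ i, φ (Λ i) + b = 0) : φ = 0 ∧ b = 0 := by
  have hrange : φ '' Set.range Λ ⊆ {-b} := by
    rintro _ ⟨_, ⟨i, rfl⟩, rfl⟩
    exact eq_neg_of_add_eq_zero_left (hφ i)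
  have hb : b = 0 := by
    have := φ.image_convexHull (Set.range Λ) ▸ Set.mem_image_of_mem φ h0
    simpa [eq_comm] using convexHull_mono hrange this
  refine ⟨LinearMap.ext_on_range hspan fun i => ?_, hb⟩
  simpa [hb] using hφ i

end Caratheodory

def affineMatrix {R : Type*} [One R] {m n : ℕ} (Λ : Fin n → Fin m → R) :
    Matrix (Fin (m + 1)) (Fin n) R :=
  Matrix.of fun (r : Fin (m + 1)) (c : Fin n) => if h : (r : ℕ) < m then Λ c ⟨r, h⟩ else 1

theorem vecMul_affineMatrix_apply {R : Type*} [CommSemiring R] {m n : ℕ}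
    (Λ : Fin n → Fin m → R) (g : Fin (m + 1) → R) (c : Fin n) :
    (g ᵥ* affineMatrix Λ) c = (fun j => g j.castSucc) ⬝ᵥ Λ c + g (Fin.last m) := by
  simp [affineMatrix, vecMul, dotProduct, Fin.sum_univ_castSucc, mul_comm]

theorem rank_affineMatrix {R : Type*} [Field R] {m n : ℕ} {Λ : Fin n → Fin m → R}
    (h : ∀ (a : Fin m → R) (b : R), (∀ c, a ⬝ᵥ Λ c + b = 0) → a = 0 ∧ b = 0) :
    (affineMatrix Λ).rank = m + 1 := by
  suffices LinearIndependent R (affineMatrix Λ).row by simpa using this.rank_matrix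
  refine vecMul_injective_iff.mp fun g₁ g₂ hg => sub_eq_zero.mp ?_
  have hsub : (g₁ - g₂) ᵥ* affineMatrix Λ = 0 := by
    rw [sub_vecMul]; exact sub_eq_zero.mpr hg
  obtain ⟨ha, hb⟩ :=
    h _ _ fun c => (vecMul_affineMatrix_apply Λ _ c).symm.trans (congrFun hsub c)
  exact funext fun r => Fin.lastCases hb (fun j => congrFun ha j) r

theorem stmt_5_general (m n : ℕ) (Λ : Fin n → (Fin m → ℂ))
    (hSiegel : (0 : Fin m → ℂ) ∈ convexHull ℝ (Set.range Λ))
    (hWH : ∀ J : Finset (Fin n), J.card ≤ 2 * m →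
      (0 : Fin m → ℂ) ∉ convexHull ℝ (Λ '' J)) :
    (Matrix.of fun (r : Fin (m + 1)) (c : Fin n) =>
      if h : (r : ℕ) < m then Λ c ⟨r, h⟩ else 1).rank = m + 1 := by
  show (affineMatrix Λ).rank = m + 1
  have hfinrank : finrank ℝ (Fin m → ℂ) = 2 * m := by
    rw [finrank_pi_fintype]; simp [mul_comm]
  have hspan := span_range_eq_top_of_forall_zero_notMem_convexHull hSiegel (hfinrank ▸ hWH)
  refine rank_affineMatrix fun a b hab => ?_
  obtain ⟨hφ, hb⟩ :=
    eq_zero_of_forall_apply_add_eq_zero (φ := dotProductBilin ℂ ℝ a) hSiegel hspan hab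
  refine ⟨funext fun j => ?_, hb⟩
  simpa using LinearMap.congr_fun hφ (Pi.single j 1)

theorem stmt_5 (m n : ℕ) (hn : 2 * m < n) (Λ : Fin n → (Fin m → ℂ))
    (hSiegel : (0 : Fin m → ℂ) ∈ convexHull ℝ (Set.range Λ))
    (hWH : ∀ J : Finset (Fin n), J.card ≤ 2 * m →
      (0 : Fin m → ℂ) ∉ convexHull ℝ (Λ '' J)) :
    (Matrix.of fun (r : Fin (m + 1)) (c : Fin n) =>
      if h : (r : ℕ) < m then Λ c ⟨r, h⟩ else 1).rank = m + 1 :=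
  stmt_5_general m n Λ hSiegel hWH
end

section
/- Let Λ = (Λ_1, …, Λ_n) in ℂ^m satisfy weak hyperbolicity, and let J ⊆ {1,…,n} be such that 0 lies in the convex hull of {Λ_j : j ∈ J}. Then the complex rank of the matrix whose columns are the vectors (Λ_j, 1) ∈ ℂ^{m+1} for j ∈ J is equal to m+1. -/
/-!
A vanishing combination `∑ r, v r • row r` of the rows says that the real-affine function
`x ↦ ∑ r < m, v r * x r + v m` vanishes at every `Λ j`, `j ∈ J`. As `0` is a convex combination
of these points, the constant `v m` is zero, so the linear part vanishes on `span ℝ (Λ '' J)`.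
By Carathéodory's theorem inside that span, `0` is a convex combination of at most
`finrank (span ℝ (Λ '' J)) + 1` of the points, so weak hyperbolicity forces the span to be all of
`ℂ^m ≅ ℝ^{2m}`, and the linear part vanishes as well.
-/

open Module Submodule Set

theorem LinearMap.apply_eq_of_mem_convexHull {𝕜 E F : Type*} [Semiring 𝕜] [PartialOrder 𝕜]
    [AddCommGroup E] [Module 𝕜 E] [AddCommGroup F] [Module 𝕜 F]
    (ℓ : E →ₗ[𝕜] F) {s : Set E} {c : F} (h : ∀ x ∈ s, ℓ x = c) {x : E}
    (hx : x ∈ convexHull 𝕜 s) : ℓ x = c :=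
  convexHull_min h ((convex_singleton c).linear_preimage ℓ) hx

section Caratheodory

variable {𝕜 E : Type*} [Field 𝕜] [LinearOrder 𝕜] [IsStrictOrderedRing 𝕜]
  [AddCommGroup E] [Module 𝕜 E] [FiniteDimensional 𝕜 E]

theorem exists_finset_card_le_finrank_span_succ_of_mem_convexHull {s : Set E} {x : E}
    (hx : x ∈ convexHull 𝕜 s) :
    ∃ t : Finset E, ↑t ⊆ s ∧ t.card ≤ finrank 𝕜 (span 𝕜 s) + 1 ∧ x ∈ convexHull 𝕜 ↑t := by
  rw [convexHull_eq_union] at hx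
  simp only [mem_iUnion] at hx
  obtain ⟨t, hts, hind, hxt⟩ := hx
  have hspan : vectorSpan 𝕜 (range ((↑) : t → E)) ≤ span 𝕜 s := by
    rw [vectorSpan_def, span_le]
    rintro _ ⟨_, ⟨⟨y, hy⟩, rfl⟩, _, ⟨⟨z, hz⟩, rfl⟩, rfl⟩
    exact sub_mem (subset_span (hts hy)) (subset_span (hts hz))
  have hcard := hind.card_le_finrank_succ
  rw [Fintype.card_coe] at hcard
  exact ⟨t, hts, hcard.trans (by grw [Submodule.finrank_mono hspan]), hxt⟩

theorem span_eq_top_of_forall_finset_notMem_convexHull {s : Set E} {x : E}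
    (hs : ∀ t : Finset E, ↑t ⊆ s → t.card ≤ finrank 𝕜 E → x ∉ convexHull 𝕜 ↑t)
    (hx : x ∈ convexHull 𝕜 s) : span 𝕜 s = ⊤ := by
  by_contra hne
  obtain ⟨t, hts, hcard, hxt⟩ := exists_finset_card_le_finrank_span_succ_of_mem_convexHull hx
  exact hs t hts (hcard.trans (finrank_lt hne)) hxt

end Caratheodory

theorem linearIndependent_rows_of_zero_mem_convexHull_of_span_eq_top {ι : Type*} {m : ℕ}
    (a : ι → Fin m → ℂ) (hspan : span ℝ (range a) = ⊤)
    (h0 : (0 : Fin m → ℂ) ∈ convexHull ℝ (range a)) :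
    LinearIndependent ℂ (Matrix.of fun (r : Fin (m + 1)) (c : ι) =>
      if h : (r : ℕ) < m then a c ⟨r, h⟩ else 1) := by
  refine Fintype.linearIndependent_iff.mpr fun v hv => ?_
  set ℓ : (Fin m → ℂ) →ₗ[ℝ] ℂ :=
    (dotProductBilin ℂ ℂ (fun r : Fin m => v r.castSucc)).restrictScalars ℝ
  have hrel : ∀ c, ℓ (a c) + v (Fin.last m) = 0 := by
    intro c
    simpa [Fin.sum_univ_castSucc, dotProduct, ℓ] using congrFun hv c
  have hlast : v (Fin.last m) = 0 := by
    have := ℓ.apply_eq_of_mem_convexHull (c := -v (Fin.last m))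
      (by rintro _ ⟨c, rfl⟩; exact eq_neg_of_add_eq_zero_left (hrel c)) h0
    simpa using this
  have hℓ : ℓ = 0 := LinearMap.ext_on hspan (by rintro _ ⟨c, rfl⟩; simpa [hlast] using hrel c)
  intro r
  induction r using Fin.lastCases with
  | last => exact hlast
  | cast r => simpa [ℓ] using LinearMap.congr_fun hℓ (Pi.single r 1)

theorem stmt_6 (m n : ℕ) (Λ : Fin n → (Fin m → ℂ))
    (hWH : ∀ J : Finset (Fin n), J.card ≤ 2 * m →
      (0 : Fin m → ℂ) ∉ convexHull ℝ (Λ '' J))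
    (J : Finset (Fin n))
    (hJ : (0 : Fin m → ℂ) ∈ convexHull ℝ (Λ '' J)) :
    (Matrix.of fun (r : Fin (m + 1)) (c : J) =>
      if h : (r : ℕ) < m then Λ c ⟨r, h⟩ else 1).rank = m + 1 := by
  classical
  have hfinrank : finrank ℝ (Fin m → ℂ) = 2 * m := by
    simp [finrank_pi_fintype, Complex.finrank_real_complex, mul_comm]
  have hsmall : ∀ t : Finset (Fin m → ℂ), ↑t ⊆ Λ '' J → t.card ≤ finrank ℝ (Fin m → ℂ) →
      (0 : Fin m → ℂ) ∉ convexHull ℝ ↑t := by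
    intro t ht hcard
    obtain ⟨u, -, hinj, rfl⟩ := Finset.exists_subset_injOn_image_eq_of_surjOn _ t ht
    rw [Finset.coe_image]
    exact hWH u (by rwa [Finset.card_image_of_injOn hinj, hfinrank] at hcard)
  have hrange : range (fun c : J => Λ c) = Λ '' J := (image_eq_range Λ J).symm
  have hspan := span_eq_top_of_forall_finset_notMem_convexHull hsmall hJ
  rw [← hrange] at hspan hJ
  rw [(linearIndependent_rows_of_zero_mem_convexHull_of_span_eq_top _ hspan hJ).rank_matrix,
    Fintype.card_fin]
end

section
/- Let Λ = (Λ_1, …, Λ_n) in ℂ^m be admissible with n > 2m. Then the affine hull of K_Λ = {r ∈ ℝ^n : r ≥ 0, ∑ r_i Λ_i = 0, ∑ r_i = 1} has dimension n − 2m − 1; that is, K_Λ is a convex polytope of dimension n − 2m − 1. -/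
/-!
By Carathéodory, `0` is a positive combination of affinely independent `Λ i`; weak hyperbolicity
forces there to be `2m + 1` of them, so they form an affine basis of `ℂ^m ≅ ℝ^{2m}` and `0` lies in
the interior of the convex hull of the `Λ i`. Hence the `Λ i` affinely span, i.e.
`H : r ↦ (∑ rᵢ Λᵢ, ∑ rᵢ)` is onto `ℂ^m × ℝ`, and `K_Λ` contains a point with all coordinates
positive. Near that point `K_Λ` is the whole fibre of `H`, so its direction is `ker H`, of
dimension `n - (2m + 1)`.
-/

open Module Set Finset Topology

section

variable {ι E : Type*}

theorem mem_interior_convexHull_of_forall_card_le_finrank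
    [NormedAddCommGroup E] [NormedSpace ℝ E] [FiniteDimensional ℝ E] {p : ι → E} {x : E}
    (hx : x ∈ convexHull ℝ (range p))
    (hsmall : ∀ J : Finset ι, J.card ≤ finrank ℝ E → x ∉ convexHull ℝ (p '' J)) :
    x ∈ interior (convexHull ℝ (range p)) := by
  classical
  obtain ⟨κ, _, z, w, hzp, hz, hwpos, hw1, hwx⟩ := eq_pos_convex_span_of_mem_convexHull hx
  have hcard : finrank ℝ E < Fintype.card κ := by
    by_contra! h
    choose q hq using fun k => hzp (mem_range_self k)
    refine hsmall (univ.image q) (card_image_le.trans h) ?_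
    refine mem_convexHull_of_exists_fintype w z (fun k => (hwpos k).le) hw1 (fun k => ?_) hwx
    exact ⟨q k, by simp, hq k⟩
  have hspan : affineSpan ℝ (range z) = ⊤ :=
    hz.affineSpan_eq_top_iff_card_eq_finrank_add_one.2 <|
      le_antisymm (hz.card_le_finrank_succ.trans (by grw [Submodule.finrank_le])) hcard
  let b : AffineBasis κ ℝ E := ⟨z, hz, hspan⟩
  have hxb : x ∈ interior (convexHull ℝ (range b)) := by
    rw [b.interior_convexHull]
    intro k
    have hcomb : univ.affineCombination ℝ b w = x := by
      rw [univ.affineCombination_eq_linear_combination _ _ hw1, ← hwx]; rfl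
    rw [← hcomb, b.coord_apply_combination_of_mem (mem_univ k) hw1]
    exact hwpos k
  exact interior_mono (convexHull_mono hzp) hxb

theorem convexHull_range_eq_image_stdSimplex [Fintype ι] [AddCommGroup E] [Module ℝ E]
    (p : ι → E) : convexHull ℝ (range p) = Fintype.linearCombination ℝ p '' stdSimplex ℝ ι := by
  classical
  rw [← convexHull_rangle_single_eq_stdSimplex, LinearMap.image_convexHull, ← range_comp]
  congr 2
  funext i
  simp [Fintype.linearCombination_apply_single]

theorem exists_pos_weights_of_mem_interior_convexHull [Fintype ι]
    [AddCommGroup E] [Module ℝ E] [TopologicalSpace E] [ContinuousAdd E] [ContinuousSMul ℝ E]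
    {p : ι → E} {x : E} (hx : x ∈ interior (convexHull ℝ (range p))) :
    ∃ w : ι → ℝ, (∀ i, 0 < w i) ∧ ∑ i, w i = 1 ∧ ∑ i, w i • p i = x := by
  have hne : Nonempty ι := by
    by_contra h
    simp [not_nonempty_iff.1 h, range_eq_empty] at hx
  set L := Fintype.linearCombination ℝ p
  set u : ι → ℝ := fun _ => (Fintype.card ι : ℝ)⁻¹
  have hu : ∑ i, u i = 1 := by simp [u]
  -- Moving `x` slightly away from the centroid `L u` stays in the hull; averaging the weights of
  -- that point with `u` gives strictly positive weights for `x`.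
  have hnear : ∀ᶠ δ in 𝓝[>] (0 : ℝ), x + δ • (x - L u) ∈ convexHull ℝ (range p) := by
    have hcont : Continuous fun δ : ℝ => x + δ • (x - L u) := by fun_prop
    have := hcont.tendsto' 0 x (by simp)
    exact (this.mono_left nhdsWithin_le_nhds).eventually (mem_interior_iff_mem_nhds.1 hx)
  obtain ⟨δ, hy, hδ⟩ := (hnear.and self_mem_nhdsWithin).exists
  rw [convexHull_range_eq_image_stdSimplex] at hy
  obtain ⟨s, ⟨hs0, hs1⟩, hsy⟩ := hy
  have hδ : 0 < δ := hδ
  refine ⟨(1 + δ)⁻¹ • (s + δ • u), fun i => ?_, ?_, ?_⟩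
  · have hui : 0 < u i := by positivity
    have hsi := hs0 i
    simp only [Pi.smul_apply, Pi.add_apply, smul_eq_mul]
    positivity
  · simp only [Pi.smul_apply, Pi.add_apply, smul_eq_mul, ← Finset.mul_sum, sum_add_distrib,
      hs1, hu, mul_one]
    exact inv_mul_cancel₀ (by positivity)
  · change L ((1 + δ)⁻¹ • (s + δ • u)) = x
    rw [map_smul, map_add, map_smul, hsy, inv_smul_eq_iff₀ (by positivity)]
    module

theorem span_range_mk_one_eq_top [Fintype ι] [AddCommGroup E] [Module ℝ E]
    {p : ι → E} (hp : affineSpan ℝ (range p) = ⊤) :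
    Submodule.span ℝ (range fun i => (p i, (1 : ℝ))) = ⊤ := by
  have hmk : ∀ y : E, (y, (1 : ℝ)) ∈ Submodule.span ℝ (range fun i => (p i, (1 : ℝ))) := by
    intro y
    obtain ⟨w, hw1, rfl⟩ :=
      eq_affineCombination_of_mem_affineSpan_of_fintype (hp ▸ AffineSubspace.mem_top ℝ E y)
    rw [← Fintype.range_linearCombination]
    refine ⟨w, ?_⟩
    simp [Fintype.linearCombination_apply, univ.affineCombination_eq_linear_combination _ _ hw1,
      ← prod_mk_sum, hw1]
  rw [eq_top_iff]
  rintro ⟨v, c⟩ -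
  have hvc : ((v, c) : E × ℝ) = (v, 1) + (c - 1) • (0, 1) := by simp
  rw [hvc]
  exact add_mem (hmk v) (Submodule.smul_mem _ _ (hmk 0))

theorem vectorSpan_setOf_nonneg_apply_eq_eq_ker [Fintype ι] [AddCommGroup E] [Module ℝ E]
    (L : (ι → ℝ) →ₗ[ℝ] E) {r₀ : ι → ℝ} (hr₀ : ∀ i, 0 < r₀ i) :
    vectorSpan ℝ {r | (∀ i, 0 ≤ r i) ∧ L r = L r₀} = LinearMap.ker L := by
  apply le_antisymm
  · rw [vectorSpan_def, Submodule.span_le]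
    rintro _ ⟨a, ⟨-, ha⟩, b, ⟨-, hb⟩, rfl⟩
    simp [vsub_eq_sub, ha, hb]
  · intro v hv
    have hopen : IsOpen {r : ι → ℝ | ∀ i, 0 < r i} := by
      simpa only [ofPred_forall] using
        isOpen_iInter_of_finite fun i => isOpen_lt continuous_const (continuous_apply i)
    have hnear : ∀ᶠ ε in 𝓝[≠] (0 : ℝ), r₀ + ε • v ∈ {r : ι → ℝ | ∀ i, 0 < r i} := by
      have hcont : Continuous fun ε : ℝ => r₀ + ε • v := by fun_prop
      exact ((hcont.tendsto' 0 r₀ (by simp)).mono_left nhdsWithin_le_nhds).eventually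
        (hopen.mem_nhds hr₀)
    obtain ⟨ε, hpos, hε⟩ := (hnear.and self_mem_nhdsWithin).exists
    have hmem : r₀ + ε • v ∈ {r | (∀ i, 0 ≤ r i) ∧ L r = L r₀} :=
      ⟨fun i => (hpos i).le, by simp [LinearMap.mem_ker.1 hv]⟩
    have hsub := vsub_mem_vectorSpan ℝ hmem ⟨fun i => (hr₀ i).le, rfl⟩
    rw [vsub_eq_sub, add_sub_cancel_left] at hsub
    exact (Submodule.smul_mem_iff _ hε).1 hsub

end

theorem stmt_8_general (m n : ℕ) (Λ : Fin n → (Fin m → ℂ))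
    (hSiegel : (0 : Fin m → ℂ) ∈ convexHull ℝ (Set.range Λ))
    (hWH : ∀ J : Finset (Fin n), J.card ≤ 2 * m →
      (0 : Fin m → ℂ) ∉ convexHull ℝ (Λ '' J)) :
    Module.finrank ℝ (vectorSpan ℝ
      {r : Fin n → ℝ | (∀ i, 0 ≤ r i) ∧ ∑ i, r i • Λ i = 0 ∧ ∑ i, r i = 1}) =
      n - 2 * m - 1 := by
  have hdim : finrank ℝ (Fin m → ℂ) = 2 * m := by
    simp [Module.finrank_pi_fintype, Complex.finrank_real_complex, mul_comm]
  have h0int := mem_interior_convexHull_of_forall_card_le_finrank hSiegel (hdim ▸ hWH)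
  obtain ⟨r₀, hr₀, hr₀sum, hr₀Λ⟩ := exists_pos_weights_of_mem_interior_convexHull h0int
  have hspan := span_range_mk_one_eq_top <|
    interior_convexHull_nonempty_iff_affineSpan_eq_top.1 ⟨0, h0int⟩
  set H := Fintype.linearCombination ℝ fun i => (Λ i, (1 : ℝ))
  have hH : ∀ r, H r = (∑ i, r i • Λ i, ∑ i, r i) := fun r => by
    simp [H, Fintype.linearCombination_apply, prod_mk_sum]
  have hK : {r : Fin n → ℝ | (∀ i, 0 ≤ r i) ∧ ∑ i, r i • Λ i = 0 ∧ ∑ i, r i = 1} =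
      {r | (∀ i, 0 ≤ r i) ∧ H r = H r₀} := by
    simp only [hH, hr₀sum, hr₀Λ, Prod.mk.injEq]
  have hrank := H.finrank_range_add_finrank_ker
  rw [Fintype.range_linearCombination, hspan, finrank_top, finrank_prod, hdim, finrank_self,
    finrank_fin_fun] at hrank
  rw [hK, vectorSpan_setOf_nonneg_apply_eq_eq_ker H hr₀]
  omega

theorem stmt_8 (m n : ℕ) (hn : 2 * m < n) (Λ : Fin n → (Fin m → ℂ))
    (hSiegel : (0 : Fin m → ℂ) ∈ convexHull ℝ (Set.range Λ))
    (hWH : ∀ J : Finset (Fin n), J.card ≤ 2 * m →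
      (0 : Fin m → ℂ) ∉ convexHull ℝ (Λ '' J)) :
    Module.finrank ℝ (vectorSpan ℝ
      {r : Fin n → ℝ | (∀ i, 0 ≤ r i) ∧ ∑ i, r i • Λ i = 0 ∧ ∑ i, r i = 1}) =
      n - 2 * m - 1 :=
  stmt_8_general m n Λ hSiegel hWH
end

section
/- Let Λ = (Λ_1, …, Λ_n) in ℂ^m be admissible and suppose index i is dispensable, i.e., 0 lies in the convex hull of {Λ_j : j ≠ i}. Then there exists z in the transversal T_Λ = {z ≠ 0 : ∑ Λ_j |z_j|² = 0} with z_i = 0 and z_j ≠ 0 for all j ≠ i. -/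
/-!
Among the nonnegative relations `∑ w j • v j = 0` take one, `w`, of maximal support `S`
(a sum of relations has the union of their supports). Then `0` is a convex combination of
`v '' S`, so if `v '' S` spanned a proper subspace, Carathéodory would put `0` in the hull of at
most `finrank E` of the vectors; hence `v '' S` spans `E`. Adding a large multiple of `w` to any
linear combination of `v '' S` makes its coefficients nonnegative, so `-v k = ∑ a j • v j` with
`a ≥ 0`, and `a + Pi.single k 1` is a relation whose support contains `k`. By maximality every
weight of `w` is positive. For the theorem, apply this to `Λ j`, `j ≠ i`, in `ℂ^m ≅ ℝ^(2m)`
and take `z j = √(w j)`.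
-/

open Finset Module

section

variable {ι E : Type*} [AddCommGroup E] [Module ℝ E]

theorem exists_finset_card_le_finrank_span_succ_of_mem_convexHull_image [FiniteDimensional ℝ E]
    {v : ι → E} {s : Set ι} {x : E} (hx : x ∈ convexHull ℝ (v '' s)) :
    ∃ J : Finset ι, #J ≤ finrank ℝ (Submodule.span ℝ (v '' s)) + 1 ∧
      x ∈ convexHull ℝ (v '' J) := by
  classical
  rw [convexHull_eq_union] at hx
  simp only [Set.mem_iUnion] at hx
  obtain ⟨t, hts, ht_indep, hxt⟩ := hx
  obtain ⟨J, -, hinj, rfl⟩ := exists_subset_injOn_image_eq_of_surjOn s t hts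
  refine ⟨J, ?_, by rwa [coe_image] at hxt⟩
  have hspan : vectorSpan ℝ (Set.range ((↑) : J.image v → E)) ≤ Submodule.span ℝ (v '' s) := by
    rw [Subtype.range_coe, vectorSpan_def, Submodule.span_le]
    rintro _ ⟨a, ha, b, hb, rfl⟩
    exact sub_mem (Submodule.subset_span (hts ha)) (Submodule.subset_span (hts hb))
  calc #J = Fintype.card (J.image v) := by rw [Fintype.card_coe, card_image_of_injOn hinj]
    _ ≤ finrank ℝ (vectorSpan ℝ (Set.range ((↑) : J.image v → E))) + 1 :=
      ht_indep.card_le_finrank_succ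
    _ ≤ finrank ℝ (Submodule.span ℝ (v '' s)) + 1 := by
      gcongr; exact Submodule.finrank_mono hspan

theorem AddSubmonoid.exists_mem_forall_support_subset {M : Type*} [Fintype ι]
    [AddCommMonoid M] [PartialOrder M] [IsOrderedAddMonoid M]
    (C : AddSubmonoid (ι → M)) (hC : ∀ u ∈ C, 0 ≤ u) :
    ∃ w ∈ C, ∀ u ∈ C, Function.support u ⊆ Function.support w := by
  classical
  have hchoice : ∀ j, ∃ u ∈ C, (∃ u' ∈ C, u' j ≠ 0) → u j ≠ 0 := fun j => by
    by_cases h : ∃ u' ∈ C, u' j ≠ 0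
    · obtain ⟨u, hu, huj⟩ := h
      exact ⟨u, hu, fun _ => huj⟩
    · exact ⟨0, C.zero_mem, fun h' => absurd h' h⟩
  choose u hu hu_ne using hchoice
  refine ⟨∑ j, u j, C.sum_mem fun j _ => hu j, fun u' hu' j hj => ?_⟩
  have hpos : 0 < u j j := lt_of_le_of_ne (hC _ (hu j) j) (hu_ne j ⟨u', hu', hj⟩).symm
  refine (lt_of_lt_of_le hpos ?_).ne'
  rw [Finset.sum_apply]
  exact single_le_sum (f := fun k => u k j) (fun k _ => hC _ (hu k) j) (mem_univ j)

variable [Fintype ι]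

def nonnegRelations (v : ι → E) : PointedCone ℝ (ι → ℝ) :=
  PointedCone.positive ℝ (ι → ℝ) ⊓ (LinearMap.ker (Fintype.linearCombination ℝ v)).restrictScalars _

theorem mem_nonnegRelations {v : ι → E} {w : ι → ℝ} :
    w ∈ nonnegRelations v ↔ 0 ≤ w ∧ ∑ j, w j • v j = 0 := by
  simp [nonnegRelations, Fintype.linearCombination_apply]

theorem exists_ne_zero_mem_nonnegRelations {v : ι → E}
    (h0 : (0 : E) ∈ convexHull ℝ (Set.range v)) : ∃ w ∈ nonnegRelations v, w ≠ 0 := by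
  classical
  rw [convexHull_range_eq_exists_affineCombination] at h0
  obtain ⟨s, w, hw_nonneg, hw_sum, hw_comb⟩ := h0
  rw [s.affineCombination_eq_linear_combination v w hw_sum] at hw_comb
  refine ⟨fun j => if j ∈ s then w j else 0, mem_nonnegRelations.2 ⟨fun j => ?_, ?_⟩, fun h => ?_⟩
  · dsimp only
    split_ifs with hj
    exacts [hw_nonneg j hj, le_rfl]
  · simpa [ite_smul] using hw_comb
  · have hsum := congr_arg (fun u => ∑ j ∈ s, u j) h
    simp only [sum_ite_of_true fun _ hj => hj, hw_sum, Pi.zero_apply, sum_const_zero] at hsum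
    exact one_ne_zero hsum

theorem zero_mem_convexHull_image_support {v : ι → E} {w : ι → ℝ}
    (hw : w ∈ nonnegRelations v) (hw0 : w ≠ 0) :
    (0 : E) ∈ convexHull ℝ (v '' Function.support w) := by
  classical
  obtain ⟨hw_nonneg, hw_rel⟩ := mem_nonnegRelations.1 hw
  obtain ⟨k, hk⟩ := Function.ne_iff.1 hw0
  have hsum : 0 < ∑ j ∈ univ.filter (w · ≠ 0), w j := by
    rw [sum_filter_ne_zero]
    exact sum_pos' (fun j _ => hw_nonneg j) ⟨k, mem_univ k, (hw_nonneg k).lt_of_ne' hk⟩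
  have hmem := (univ.filter (w · ≠ 0)).centerMass_mem_convexHull (z := v)
    (fun j _ => hw_nonneg j) hsum (fun j hj => Set.mem_image_of_mem v (mem_filter.1 hj).2)
  rwa [centerMass, sum_filter_of_ne (fun j _ hj => left_ne_zero_of_smul hj), hw_rel,
    smul_zero] at hmem

theorem exists_nonneg_sum_smul_eq_of_mem_span_image_support {v : ι → E} {w : ι → ℝ} {x : E}
    (hw : w ∈ nonnegRelations v) (hx : x ∈ Submodule.span ℝ (v '' Function.support w)) :
    ∃ a : ι → ℝ, 0 ≤ a ∧ ∑ j, a j • v j = x := by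
  obtain ⟨hw_nonneg, hw_rel⟩ := mem_nonnegRelations.1 hw
  obtain ⟨c, hc_supp, rfl⟩ := Finsupp.mem_span_image_iff_linearCombination ℝ |>.1 hx
  rw [Finsupp.mem_supported'] at hc_supp
  set t : ℝ := ∑ j, |c j| / w j
  refine ⟨fun j => c j + t * w j, fun j => ?_, ?_⟩
  · by_cases hj : w j = 0
    · simp [hj, hc_supp j (by simpa using hj)]
    · have hwj : 0 < w j := (hw_nonneg j).lt_of_ne' hj
      have ht : |c j| / w j ≤ t :=
        single_le_sum (f := fun k => |c k| / w k)
          (fun k _ => div_nonneg (abs_nonneg _) (hw_nonneg k)) (mem_univ j)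
      have hc_le : |c j| ≤ t * w j := by rwa [div_le_iff₀ hwj] at ht
      dsimp only [Pi.zero_apply]
      linarith [neg_abs_le (c j)]
  · simp only [add_smul, sum_add_distrib, mul_smul, ← smul_sum, hw_rel, smul_zero, add_zero]
    rw [Finsupp.linearCombination_apply]
    exact (Finsupp.sum_fintype c (fun j a => a • v j) fun _ => zero_smul ℝ _).symm

variable [FiniteDimensional ℝ E]

theorem span_image_support_eq_top {v : ι → E}
    (hv : ∀ J : Finset ι, #J ≤ finrank ℝ E → (0 : E) ∉ convexHull ℝ (v '' J))
    {w : ι → ℝ} (hw : w ∈ nonnegRelations v) (hw0 : w ≠ 0) :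
    Submodule.span ℝ (v '' Function.support w) = ⊤ := by
  by_contra hne
  obtain ⟨J, hJ_card, hJ⟩ :=
    exists_finset_card_le_finrank_span_succ_of_mem_convexHull_image
      (zero_mem_convexHull_image_support hw hw0)
  exact hv J (hJ_card.trans (Submodule.finrank_lt hne)) hJ

theorem exists_pos_sum_smul_eq_zero {v : ι → E}
    (h0 : (0 : E) ∈ convexHull ℝ (Set.range v))
    (hv : ∀ J : Finset ι, #J ≤ finrank ℝ E → (0 : E) ∉ convexHull ℝ (v '' J)) :
    ∃ w : ι → ℝ, (∀ j, 0 < w j) ∧ ∑ j, w j • v j = 0 := by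
  classical
  obtain ⟨w, hw, hw_max⟩ := (nonnegRelations v).toAddSubmonoid.exists_mem_forall_support_subset
    fun u hu => (mem_nonnegRelations.1 hu).1
  obtain ⟨u, hu, hu0⟩ := exists_ne_zero_mem_nonnegRelations h0
  have hw0 : w ≠ 0 := fun h => hu0 (by simpa [h] using hw_max u hu)
  obtain ⟨hw_nonneg, hw_rel⟩ := mem_nonnegRelations.1 hw
  refine ⟨w, fun k => (hw_nonneg k).lt_of_ne' fun hk => ?_, hw_rel⟩
  obtain ⟨a, ha_nonneg, ha⟩ := exists_nonneg_sum_smul_eq_of_mem_span_image_support hw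
    (x := -v k) (by simp [span_image_support_eq_top hv hw hw0])
  have hrel : a + Pi.single k 1 ∈ nonnegRelations v := by
    refine mem_nonnegRelations.2 ⟨add_nonneg ha_nonneg (Pi.single_nonneg.2 zero_le_one), ?_⟩
    simp [add_smul, sum_add_distrib, ha, Pi.single_apply, ite_smul]
  refine hw_max _ hrel (Function.mem_support.2 ?_) hk
  simpa using (add_pos_of_nonneg_of_pos (ha_nonneg k) one_pos).ne'

theorem exists_nonneg_sum_smul_eq_zero_of_zero_mem_convexHull_ne {v : ι → E} {i : ι}
    (hi : (0 : E) ∈ convexHull ℝ (v '' {j | j ≠ i}))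
    (hv : ∀ J : Finset ι, #J ≤ finrank ℝ E → (0 : E) ∉ convexHull ℝ (v '' J)) :
    ∃ r : ι → ℝ, 0 ≤ r ∧ r i = 0 ∧ (∀ j ≠ i, 0 < r j) ∧ ∑ j, r j • v j = 0 := by
  classical
  obtain ⟨w, hw_pos, hw_rel⟩ := exists_pos_sum_smul_eq_zero (v := fun j : {j // j ≠ i} => v j)
    (by rwa [← Subtype.range_coe_subtype, ← Set.range_comp] at hi)
    fun J hJ => by
      simpa [Set.image_image] using hv (J.map (Function.Embedding.subtype _)) (by simpa using hJ)
  refine ⟨fun j => if h : j = i then 0 else w ⟨j, h⟩, fun j => ?_, by simp, fun j hj => ?_, ?_⟩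
  · dsimp only
    split_ifs with h
    exacts [le_rfl, (hw_pos _).le]
  · simpa [hj] using hw_pos ⟨j, hj⟩
  · rw [Fintype.sum_eq_add_sum_subtype_ne _ i]
    beta_reduce
    rw [dif_pos rfl, zero_smul, zero_add]
    exact (sum_congr rfl fun j _ => by rw [dif_neg j.2]).trans hw_rel

end

theorem stmt_18_general (m n : ℕ) (Λ : Fin n → (Fin m → ℂ))
    (hWH : ∀ J : Finset (Fin n), J.card ≤ 2 * m →
      (0 : Fin m → ℂ) ∉ convexHull ℝ (Λ '' J))
    (i : Fin n)
    (hi : (0 : Fin m → ℂ) ∈ convexHull ℝ (Λ '' {j | j ≠ i})) :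
    ∃ z : Fin n → ℂ, z ≠ 0 ∧ ∑ j, (‖z j‖ ^ 2 : ℝ) • Λ j = 0 ∧
      z i = 0 ∧ ∀ j, j ≠ i → z j ≠ 0 := by
  have hdim : finrank ℝ (Fin m → ℂ) = 2 * m := by
    rw [finrank_pi_fintype]; simp [mul_comm]
  obtain ⟨r, hr_nonneg, hr_i, hr_pos, hr_rel⟩ :=
    exists_nonneg_sum_smul_eq_zero_of_zero_mem_convexHull_ne hi (hdim ▸ hWH)
  have hnorm : ∀ j, ‖((√(r j) : ℝ) : ℂ)‖ ^ 2 = r j := fun j => by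
    rw [Complex.norm_real, Real.norm_of_nonneg (Real.sqrt_nonneg _), Real.sq_sqrt (hr_nonneg j)]
  have hz_ne : ∀ j ≠ i, ((√(r j) : ℝ) : ℂ) ≠ 0 := fun j hj => by
    simpa using Real.sqrt_ne_zero'.2 (hr_pos j hj)
  obtain ⟨-, ⟨j, hj, -⟩⟩ := convexHull_nonempty_iff.1 ⟨0, hi⟩
  refine ⟨fun j => ((√(r j) : ℝ) : ℂ), fun h => hz_ne j hj (congrFun h j), ?_,
    by simp [hr_i], hz_ne⟩
  simpa only [hnorm] using hr_rel

theorem stmt_18 (m n : ℕ) (Λ : Fin n → (Fin m → ℂ))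
    (hSiegel : (0 : Fin m → ℂ) ∈ convexHull ℝ (Set.range Λ))
    (hWH : ∀ J : Finset (Fin n), J.card ≤ 2 * m →
      (0 : Fin m → ℂ) ∉ convexHull ℝ (Λ '' J))
    (i : Fin n)
    (hi : (0 : Fin m → ℂ) ∈ convexHull ℝ (Λ '' {j | j ≠ i})) :
    ∃ z : Fin n → ℂ, z ≠ 0 ∧ ∑ j, (‖z j‖ ^ 2 : ℝ) • Λ j = 0 ∧
      z i = 0 ∧ ∀ j, j ≠ i → z j ≠ 0 :=
  stmt_18_general m n Λ hWH i hi
end
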